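/- arXiv:1503.08341 — 5 statements merged into one kernel-verified Lean document; each statement's English description precedes it below -/
import Mathlib

section
/- Suppose $n > k \ge 2$ and $(\lambda,k,\mu)\to n$, i.e. every set mapping $F:[\lambda]^k\to[\lambda]^{<\mu}$ has a free set of size $n$. Then there exists a symmetric irreflexive $(k+1)$-ary relation $R$ on $\lambda$ such that: (i) no $(n+1)$-element subset of $\lambda$ is a complete $R$-hypergraph; and (ii) for every strong set mapping $F:[\lambda]^k\to[\lambda]^{<\mu}$ (meaning $v\subseteq F(v)$ for all $v\in[\lambda]^k$), there exists $w\in[\lambda]^n$ which is a complete $R$-hypergraph and satisfies $w\not\subseteq F(v)$ for every $v\in[w]^k$. -/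
open Cardinal

/-- `F : [λ]^k → [λ]^{<μ}` is a set mapping. -/
def IsSetMapping {A : Type*} (μ : Cardinal) (k : ℕ) (F : Finset A → Set A) : Prop :=
  ∀ x : Finset A, x.card = k → F x ∩ ↑x = ∅ ∧ Cardinal.mk (F x) < μ

/-- `X` is free for `F`. -/
def IsFree {A : Type*} (k : ℕ) (F : Finset A → Set A) (X : Finset A) : Prop :=
  ∀ x ⊆ X, x.card = k → F x ∩ ↑X = ∅

/-- `(λ, k, μ) → n`. -/
def SetMappingArrow (A : Type*) (μ : Cardinal) (k n : ℕ) : Prop :=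
  ∀ F : Finset A → Set A, IsSetMapping μ k F →
    ∃ X : Finset A, X.card = n ∧ IsFree k F X

/-- `w` is a complete `R`-hypergraph: `R` holds on every injective `(k+1)`-tuple
from `w`. -/
def IsCompleteHypergraph {A : Type*} (k : ℕ) (R : (Fin (k + 1) → A) → Prop)
    (w : Finset A) : Prop :=
  ∀ α : Fin (k + 1) → A, Function.Injective α → (∀ i, α i ∈ w) → R α

/-!
If `(λ, k, μ) → n` with `k < n`, then `λ ≥ μ^{+k}`: by induction on `m`, a set of size
`< μ^{+m}` carries a set mapping on its `m`-subsets with no free `(m+1)`-set, obtained from the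
mappings on the initial segments of a well-order of minimal type.

Split `λ` into `ω` colour classes of size `λ` and let `R` hold on the `(k+1)`-tuples whose colours
are distinct and `< n`; a complete `R`-hypergraph has at most `n` vertices. Given `F`, fix a point
of each colour `k+1, …, n-1` and pick `x_i` of colour `i ≤ k` in a fixed subset of size `μ^{+i}`
of its class, from the top down: `x_i` avoids `F v` for every `k`-set `v` made of fixed points,
the `x_j` with `j > i` and points of the classes below `i`, and these `F v` cover fewer than
`μ^{+i}` points. Every `k`-subset `v` of the resulting `w` misses some `x_i`, and the largest
such `i` gives `x_i ∉ F v`.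
-/

open Set Function

universe u

theorem Cardinal.mk_biUnion_lt_of_finite {α ι : Type*} {c : Cardinal} (hc : ℵ₀ ≤ c) {s : Set ι}
    (hs : s.Finite) (f : ι → Set α) (hf : ∀ i ∈ s, #(f i) < c) : #(⋃ i ∈ s, f i) < c := by
  induction s, hs using Set.Finite.induction_on with
  | empty => simpa using aleph0_pos.trans_le hc
  | @insert a s _ _ ih =>
    rw [biUnion_insert]
    exact (mk_union_le _ _).trans_lt <| add_lt_of_lt hc (hf a (mem_insert a s))
      (ih fun i hi => hf i (mem_insert_of_mem a hi))

theorem Cardinal.mk_finset_le_max (α : Type u) : #(Finset α) ≤ max ℵ₀ #α := by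
  classical
  exact (mk_le_of_surjective List.toFinset_surjective).trans (mk_list_le_max α)

theorem Order.lt_succ_iterate_succ_iff {α : Type*} [LinearOrder α] [SuccOrder α] [NoMaxOrder α]
    {a b : α} {m : ℕ} : a < succ^[m + 1] b ↔ a ≤ succ^[m] b := by
  rw [iterate_succ_apply']
  exact lt_succ_iff

theorem Order.succ_iterate_mono {α : Type*} [Preorder α] [SuccOrder α] (a : α) :
    Monotone fun m : ℕ => succ^[m] a :=
  fun _ _ h => monotone_iterate_of_id_le (fun _ => le_succ _) h a

section SetMappings

variable {A : Type u} {μ : Cardinal.{u}} {k : ℕ} {F : Finset A → Set A}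

theorem setOf_coe_subset_subset_range_map (Z : Set A) :
    {v : Finset A | ↑v ⊆ Z} ⊆ range (Finset.map (Embedding.subtype (· ∈ Z))) := by
  classical
  exact fun v hv => ⟨v.subtype (· ∈ Z), Finset.subtype_map_of_mem hv⟩

def imageOfSubsets (F : Finset A → Set A) (k : ℕ) (Z : Set A) : Set A :=
  ⋃ v ∈ {v : Finset A | v.card = k ∧ ↑v ⊆ Z}, F v

theorem subset_imageOfSubsets {Z : Set A} {v : Finset A} (hv : v.card = k) (hvZ : ↑v ⊆ Z) :
    F v ⊆ imageOfSubsets F k Z :=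
  subset_biUnion_of_mem (u := F) ⟨hv, hvZ⟩

theorem mk_imageOfSubsets_lt_of_finite (hμ : ℵ₀ ≤ μ) (hF : ∀ v : Finset A, v.card = k → #(F v) < μ)
    {Z : Set A} (hZ : Z.Finite) : #(imageOfSubsets F k Z) < μ := by
  have := hZ.to_subtype
  refine mk_biUnion_lt_of_finite hμ ?_ F fun v hv => hF v hv.1
  exact (finite_range _).subset fun v hv => setOf_coe_subset_subset_range_map Z hv.2

theorem mk_imageOfSubsets_le {c : Cardinal.{u}} (hc : ℵ₀ ≤ c) (hμc : μ ≤ c)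
    (hF : ∀ v : Finset A, v.card = k → #(F v) < μ) {Z : Set A} (hZ : #Z ≤ c) :
    #(imageOfSubsets F k Z) ≤ c := by
  set s := {v : Finset A | v.card = k ∧ ↑v ⊆ Z}
  have hs : #s ≤ c := calc
    #s ≤ #(range (Finset.map (Embedding.subtype (· ∈ Z)))) :=
      mk_le_mk_of_subset fun v hv => setOf_coe_subset_subset_range_map Z hv.2
    _ ≤ #(Finset Z) := mk_range_le
    _ ≤ c := (mk_finset_le_max Z).trans (max_le hc hZ)
  calc #(imageOfSubsets F k Z) ≤ #s * ⨆ v : s, #(F v) := mk_biUnion_le F s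
    _ ≤ c * c := mul_le_mul' hs (ciSup_le' fun v => (hF v v.2.1).le.trans hμc)
    _ = c := mul_eq_self hc

end SetMappings

section HittingMaps

variable {A : Type u} {μ : Cardinal.{u}}

/-- `D` witnesses `(S, m, μ) ↛ m + 1`. -/
structure IsHittingMap (μ : Cardinal.{u}) (m : ℕ) (S : Set A) (D : Finset A → Set A) : Prop where
  mk_lt : ∀ v, #(D v) < μ
  disjoint : ∀ v, Disjoint (D v) ↑v
  subset : ∀ v, D v ⊆ S
  hits : ∀ u : Finset A, u.card = m + 1 → ↑u ⊆ S → ∃ v ⊆ u, v.card = m ∧ (D v ∩ ↑u).Nonempty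

/-- `E x` is the initial segment below `x` in a well-order of `S` of type `c.ord`. -/
theorem exists_small_initialSegments [DecidableEq A] {S : Set A} {c : Cardinal.{u}} (hc : c ≠ 0)
    (hS : #S ≤ c) :
    ∃ E : A → Set A, (∀ x, E x ⊆ S) ∧ (∀ x, x ∉ E x) ∧ (∀ x, #(E x) < c) ∧
      ∀ u : Finset A, u.Nonempty → ↑u ⊆ S → ∃ x ∈ u, ↑(u.erase x) ⊆ E x := by
  classical
  obtain ⟨f⟩ : Nonempty (S ↪ c.ord.ToType) := by rwa [← le_def, mk_ord_toType]
  refine ⟨fun x => if hx : x ∈ S then (↑) '' (f ⁻¹' Iio (f ⟨x, hx⟩)) else ∅, ?_, ?_, ?_, ?_⟩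
  · intro x
    dsimp only
    split_ifs
    exacts [Subtype.coe_image_subset _ _, empty_subset _]
  · intro x
    dsimp only
    split_ifs with hx
    · rintro ⟨y, hy, hyx⟩
      rw [show y = ⟨x, hx⟩ from Subtype.ext hyx] at hy
      exact lt_irrefl _ (mem_Iio.1 (mem_preimage.1 hy))
    · exact notMem_empty x
  · intro x
    dsimp only
    split_ifs with hx
    · exact mk_image_le.trans_lt <| (mk_preimage_of_injective _ _ f.injective).trans_lt <| by
        simpa using mk_Iio_lt (f ⟨x, hx⟩)
    · simpa using pos_iff_ne_zero.2 hc
  · intro u hu huS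
    obtain ⟨⟨x, hxu⟩, -, hmax⟩ :=
      u.attach.exists_max_image (fun a => f ⟨a, huS a.2⟩) (Finset.attach_nonempty_iff.2 hu)
    refine ⟨x, hxu, fun y hy => ?_⟩
    obtain ⟨hyx, hyu⟩ := Finset.mem_erase.1 hy
    dsimp only
    rw [dif_pos (huS hxu)]
    refine ⟨⟨y, huS hyu⟩, lt_of_le_of_ne (hmax ⟨y, hyu⟩ (Finset.mem_attach _ _)) ?_, rfl⟩
    exact fun h => hyx (congrArg Subtype.val (f.injective h))

theorem exists_isHittingMap_zero {S : Set A} (hS : #S < μ) : ∃ D, IsHittingMap μ 0 S D := by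
  refine ⟨fun v => S \ ↑v, fun v => (mk_le_mk_of_subset sdiff_subset).trans_lt hS,
    fun v => disjoint_sdiff_left, fun v => sdiff_subset, fun u hu huS => ?_⟩
  obtain ⟨a, rfl⟩ := Finset.card_eq_one.1 hu
  exact ⟨∅, Finset.empty_subset _, rfl, a, ⟨huS (by simp), by simp⟩, by simp⟩

/-- `D v` is `D_x (v \ {x})` for the top element `x` of `v`. -/
theorem exists_isHittingMap_succ [DecidableEq A] (hμ : ℵ₀ ≤ μ) {m : ℕ} {S : Set A} {E : A → Set A}
    (hES : ∀ x, E x ⊆ S) (hxE : ∀ x, x ∉ E x)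
    (htop : ∀ u : Finset A, u.Nonempty → ↑u ⊆ S → ∃ x ∈ u, ↑(u.erase x) ⊆ E x)
    (hE : ∀ x, ∃ D, IsHittingMap μ m (E x) D) : ∃ D, IsHittingMap μ (m + 1) S D := by
  choose Dx hDx using hE
  have hsub : ∀ (v : Finset A) y, y ∈ ⋃ x ∈ v, ⋃ (_ : ↑(v.erase x) ⊆ E x), Dx x (v.erase x) →
      ∃ x ∈ v, y ∈ Dx x (v.erase x) := by
    intro v y hy
    simp only [mem_iUnion] at hy
    obtain ⟨x, hx, -, hy⟩ := hy
    exact ⟨x, hx, hy⟩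
  refine ⟨fun v => ⋃ x ∈ v, ⋃ (_ : ↑(v.erase x) ⊆ E x), Dx x (v.erase x), ⟨?_, ?_, ?_, ?_⟩⟩
  · intro v
    refine (mk_le_mk_of_subset fun y hy => ?_).trans_lt
      (mk_biUnion_lt_of_finite hμ v.finite_toSet (fun x => Dx x (v.erase x))
        fun x _ => (hDx x).mk_lt _)
    obtain ⟨x, hx, hy⟩ := hsub v y hy
    exact mem_biUnion hx hy
  · intro v
    refine Set.disjoint_left.2 fun y hy hyv => ?_
    obtain ⟨x, -, hy⟩ := hsub v y hy
    have hyx : y ≠ x := fun h => hxE x (h ▸ (hDx x).subset _ hy)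
    exact Set.disjoint_left.1 ((hDx x).disjoint _) hy (Finset.mem_erase.2 ⟨hyx, hyv⟩)
  · intro v y hy
    obtain ⟨x, -, hy⟩ := hsub v y hy
    exact hES x ((hDx x).subset _ hy)
  · intro u hu huS
    obtain ⟨x, hxu, hux⟩ := htop u (Finset.card_pos.1 (by omega)) huS
    obtain ⟨v, hvu, hv, z, hzD, hzu⟩ :=
      (hDx x).hits (u.erase x) (by rw [Finset.card_erase_of_mem hxu, hu]; rfl) hux
    have hxv : x ∉ v := fun h => Finset.notMem_erase x u (hvu h)
    refine ⟨insert x v, Finset.insert_subset hxu (hvu.trans (Finset.erase_subset x u)),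
      by rw [Finset.card_insert_of_notMem hxv, hv], z, ?_, Finset.mem_of_mem_erase hzu⟩
    simp only [mem_iUnion]
    refine ⟨x, Finset.mem_insert_self x v, ?_, ?_⟩ <;> rw [Finset.erase_insert hxv]
    exacts [(Finset.coe_subset.2 hvu).trans hux, hzD]

theorem exists_isHittingMap (hμ : ℵ₀ ≤ μ) (m : ℕ) (S : Set A) (hS : #S < Order.succ^[m] μ) :
    ∃ D, IsHittingMap μ m S D := by
  classical
  induction m generalizing S with
  | zero => exact exists_isHittingMap_zero hS
  | succ m ih =>
    have hc : Order.succ^[m] μ ≠ 0 :=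
      (aleph0_pos.trans_le (hμ.trans (Order.le_succ_iterate m μ))).ne'
    obtain ⟨E, hES, hxE, hE, htop⟩ :=
      exists_small_initialSegments hc (Order.lt_succ_iterate_succ_iff.1 hS)
    exact exists_isHittingMap_succ hμ hES hxE htop fun x => ih (E x) (hE x)

theorem succ_iterate_le_mk_of_setMappingArrow {k n : ℕ} (hμ : ℵ₀ ≤ μ) (hkn : k < n)
    (h : SetMappingArrow A μ k n) : Order.succ^[k] μ ≤ #A := by
  by_contra! hA
  obtain ⟨D, hD⟩ := exists_isHittingMap hμ k univ (by rwa [mk_univ])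
  obtain ⟨X, hX, hXfree⟩ := h D fun v _ => ⟨(hD.disjoint v).inter_eq, hD.mk_lt v⟩
  obtain ⟨u, huX, hu⟩ := Finset.exists_subset_card_eq (show k + 1 ≤ X.card by omega)
  obtain ⟨v, hvu, hv, z, hzD, hzu⟩ := hD.hits u hu (subset_univ _)
  have hz : z ∈ D v ∩ ↑X := ⟨hzD, huX hzu⟩
  rwa [hXfree v (hvu.trans huX) hv] at hz

end HittingMaps

section Transversals

variable {A : Type u} {μ : Cardinal.{u}} {k : ℕ} {F : Finset A → Set A}

theorem mk_imageOfSubsets_lt_succ_iterate (hμ : ℵ₀ ≤ μ)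
    (hF : ∀ v : Finset A, v.card = k → #(F v) < μ) (P : Finset A) (G : ℕ → Set A) (m : ℕ)
    (hG : ∀ i < m, #(G i) ≤ Order.succ^[i] μ) :
    #(imageOfSubsets F k (↑P ∪ ⋃ i ∈ Iio m, G i)) < Order.succ^[m] μ := by
  cases m with
  | zero => simpa using mk_imageOfSubsets_lt_of_finite hμ hF P.finite_toSet
  | succ m =>
    have hm : ℵ₀ ≤ Order.succ^[m] μ := hμ.trans (Order.le_succ_iterate m μ)
    have hm' : ℵ₀ ≤ Order.succ^[m + 1] μ := hμ.trans (Order.le_succ_iterate _ μ)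
    have hG' : ∀ i ∈ Iio (m + 1), #(G i) < Order.succ^[m + 1] μ := fun i hi =>
      Order.lt_succ_iterate_succ_iff.2 <|
        (hG i hi).trans (Order.succ_iterate_mono μ (Nat.lt_succ_iff.1 hi))
    have hZ : #(↑P ∪ ⋃ i ∈ Iio (m + 1), G i : Set A) < Order.succ^[m + 1] μ :=
      (mk_union_le _ _).trans_lt <| add_lt_of_lt hm' (P.finite_toSet.lt_aleph0.trans_le hm')
        (mk_biUnion_lt_of_finite hm' (finite_Iio _) G hG')
    refine (mk_imageOfSubsets_le hm (Order.le_succ_iterate m μ) hF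
      (Order.lt_succ_iterate_succ_iff.1 hZ)).trans_lt ?_
    rw [iterate_succ_apply']
    exact Order.lt_succ _

/-- The top point `x (m-1) ∈ G (m-1)` is chosen outside
`imageOfSubsets F k (P ∪ G 0 ∪ ⋯ ∪ G (m-2))`, a set of size `< succ^[m-1] μ`; the lower points
are then chosen recursively with `P` enlarged by it. -/
theorem exists_transversal_not_covered (hμ : ℵ₀ ≤ μ)
    (hF : ∀ v : Finset A, v.card = k → #(F v) < μ) (G : ℕ → Set A) (m : ℕ) (P : Finset A)
    (hG : ∀ i < m, #(G i) = Order.succ^[i] μ) :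
    ∃ x : Fin m → A, (∀ i : Fin m, x i ∈ G i) ∧ ∀ v : Finset A, v.card = k →
      ↑v ⊆ ↑P ∪ range x → ¬ range x ⊆ ↑v → ¬ range x ⊆ F v := by
  classical
  induction m generalizing P with
  | zero => exact ⟨Fin.elim0, fun i => i.elim0, fun v _ _ h => (h (by simp)).elim⟩
  | succ m ih =>
    have hZ := mk_imageOfSubsets_lt_succ_iterate hμ hF P G m fun i hi => (hG i (by omega)).le
    obtain ⟨top, htopG, htopZ⟩ := sdiff_nonempty.2 fun h =>
      (mk_le_mk_of_subset h).not_gt (hG m (by omega) ▸ hZ)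
    obtain ⟨x, hxG, hx⟩ := ih (insert top P) fun i hi => hG i (by omega)
    refine ⟨Fin.snoc (α := fun _ => A) x top, fun i => ?_, fun v hv hvP hxv hxF => ?_⟩
    · refine Fin.lastCases ?_ (fun i => ?_) i
      · simpa using htopG
      · simpa using hxG i
    rw [Fin.range_snoc] at hvP hxv hxF
    by_cases htop : top ∈ v
    · refine hx v hv ?_ (fun h => hxv (insert_subset htop h)) ((subset_insert _ _).trans hxF)
      rwa [Finset.coe_insert, insert_union, ← union_insert]
    · refine htopZ (subset_imageOfSubsets hv (fun y hy => ?_) (hxF (mem_insert _ _)))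
      rcases hvP hy with hyP | rfl | ⟨i, rfl⟩
      · exact Or.inl hyP
      · exact (htop hy).elim
      · exact Or.inr (mem_biUnion i.2 (hxG i))

end Transversals

section Rainbow

variable {A : Type u}

theorem exists_coloring_mk_fiber [Infinite A] : ∃ col : A → ℕ, ∀ i, #(col ⁻¹' {i}) = #A := by
  obtain ⟨e⟩ : Nonempty (A × ULift.{u} ℕ ≃ A) :=
    Cardinal.eq.1 (by simp [mul_aleph0_eq (aleph0_le_mk A)])
  refine ⟨fun a => (e.symm a).2.down, fun i => le_antisymm (mk_set_le _) ?_⟩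
  exact mk_le_of_injective (f := fun a => ⟨e (a, ⟨i⟩), by simp⟩)
    fun a b h => by simpa using congrArg Subtype.val h

def IsRainbow {ι : Type*} (col : A → ℕ) (n : ℕ) (α : ι → A) : Prop :=
  Injective (col ∘ α) ∧ ∀ i, col (α i) < n

theorem IsRainbow.injective {ι : Type*} {col : A → ℕ} {n : ℕ} {α : ι → A}
    (h : IsRainbow col n α) : Injective α :=
  h.1.of_comp

theorem IsRainbow.comp_injective {ι κ : Type*} {col : A → ℕ} {n : ℕ} {α : ι → A}
    (h : IsRainbow col n α) {σ : κ → ι} (hσ : Injective σ) : IsRainbow col n (α ∘ σ) :=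
  ⟨h.1.comp hσ, fun i => h.2 (σ i)⟩

theorem Finset.exists_injective_fin_mem_range {w : Finset A} {m : ℕ} {p q : A} (hp : p ∈ w)
    (hq : q ∈ w) (hm : 2 ≤ m) (hmw : m ≤ w.card) :
    ∃ α : Fin m → A, Injective α ∧ (∀ i, α i ∈ w) ∧ p ∈ Set.range α ∧ q ∈ Set.range α := by
  classical
  obtain ⟨u, hpqu, huw, hu⟩ := Finset.exists_subsuperset_card_eq
    (Finset.insert_subset hp (Finset.singleton_subset_iff.2 hq)) (Finset.card_le_two.trans hm) hmw
  let e := u.equivFinOfCardEq hu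
  refine ⟨fun i => e.symm i, Subtype.val_injective.comp e.symm.injective,
    fun i => huw (e.symm i).2, ⟨e ⟨p, hpqu (by simp)⟩, by simp⟩, ⟨e ⟨q, hpqu (by simp)⟩, by simp⟩⟩

theorem isCompleteHypergraph_isRainbow {k n : ℕ} {col : A → ℕ} {w : Finset A}
    (hinj : InjOn col ↑w) (hlt : ∀ a ∈ w, col a < n) :
    IsCompleteHypergraph k (IsRainbow col n) w :=
  fun _ hα hαw => ⟨fun i j hij => hα (hinj (hαw i) (hαw j) hij), fun i => hlt _ (hαw i)⟩

theorem IsCompleteHypergraph.card_le_of_isRainbow {k n : ℕ} {col : A → ℕ} {w : Finset A}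
    (hk : 1 ≤ k) (hw : k + 1 ≤ w.card) (h : IsCompleteHypergraph k (IsRainbow col n) w) :
    w.card ≤ n := by
  have hpair : ∀ p ∈ w, ∀ q ∈ w, col p < n ∧ (col p = col q → p = q) := by
    intro p hp q hq
    obtain ⟨α, hα, hαw, ⟨i, rfl⟩, ⟨j, rfl⟩⟩ :=
      Finset.exists_injective_fin_mem_range hp hq (by omega) hw
    exact ⟨(h α hα hαw).2 i, fun hij => congrArg α ((h α hα hαw).1 hij)⟩
  simpa using Finset.card_le_card_of_injOn col (t := Finset.range n)
    (fun p hp => Finset.mem_range.2 (hpair p hp p hp).1)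
    (fun p hp q hq => (hpair p hp q hq).2)

theorem exists_rainbow_finset_extending [DecidableEq A] {k n : ℕ} (hkn : k < n) {col : A → ℕ}
    {x : Fin (k + 1) → A} (hx : ∀ i, col (x i) = i) {p : ℕ → A} (hp : ∀ i, col (p i) = i) :
    ∃ w : Finset A, w.card = n ∧ InjOn col ↑w ∧ (∀ a ∈ w, col a < n) ∧ range x ⊆ ↑w ∧
      ↑w ⊆ ↑((Finset.range n).image p) ∪ range x := by
  let y : ℕ → A := fun i => if h : i < k + 1 then x ⟨i, h⟩ else p i
  have hy : ∀ i, col (y i) = i := by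
    intro i
    by_cases h : i < k + 1
    · simp only [y, dif_pos h, hx]
    · simp only [y, dif_neg h, hp]
  refine ⟨(Finset.range n).image y, ?_, ?_, ?_, ?_, ?_⟩
  · rw [Finset.card_image_of_injOn fun i _ j _ hij => by simpa only [hy] using congrArg col hij,
      Finset.card_range]
  · intro a ha b hb hab
    obtain ⟨i, -, rfl⟩ := Finset.mem_image.1 ha
    obtain ⟨j, -, rfl⟩ := Finset.mem_image.1 hb
    rw [hy, hy] at hab
    rw [hab]
  · intro a ha
    obtain ⟨i, hi, rfl⟩ := Finset.mem_image.1 ha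
    rw [hy]
    exact Finset.mem_range.1 hi
  · rintro _ ⟨i, rfl⟩
    exact Finset.mem_image.2 ⟨i, Finset.mem_range.2 (by omega), dif_pos i.2⟩
  · intro a ha
    obtain ⟨i, hi, rfl⟩ := Finset.mem_image.1 ha
    by_cases h : i < k + 1
    · exact Or.inr ⟨⟨i, h⟩, (dif_pos h : y i = _).symm⟩
    · exact Or.inl (Finset.mem_image.2 ⟨i, hi, (dif_neg h : y i = _).symm⟩)

theorem exists_rainbow_finset_not_covered {μ : Cardinal.{u}} {k n : ℕ}
    (hμ : ℵ₀ ≤ μ) (hkn : k < n) {col : A → ℕ} (hcol : ∀ i, Order.succ^[k] μ ≤ #(col ⁻¹' {i}))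
    {F : Finset A → Set A} (hF : ∀ v : Finset A, v.card = k → #(F v) < μ) :
    ∃ w : Finset A, w.card = n ∧ InjOn col ↑w ∧ (∀ a ∈ w, col a < n) ∧
      ∀ v ⊆ w, v.card = k → ¬ ↑w ⊆ F v := by
  classical
  choose G hGcol hG using fun i => le_mk_iff_exists_subset.1
    ((Order.succ_iterate_mono μ (min_le_right i k)).trans (hcol i))
  choose p hp using fun i => mk_set_ne_zero_iff.1
    ((aleph0_pos.trans_le (hμ.trans (Order.le_succ_iterate k μ))).trans_le (hcol i)).ne'
  obtain ⟨x, hxG, hx⟩ := exists_transversal_not_covered hμ hF G (k + 1) ((Finset.range n).image p)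
    fun i hi => by rw [hG, min_eq_left (by omega)]
  have hcolx : ∀ i, col (x i) = i := fun i => hGcol i (hxG i)
  obtain ⟨w, hw, hinj, hlt, hxw, hwx⟩ := exists_rainbow_finset_extending hkn hcolx hp
  refine ⟨w, hw, hinj, hlt, fun v hvw hv hwF => ?_⟩
  have hxv : ¬ range x ⊆ ↑v := fun h => by
    have := Finset.card_le_card_of_injOn x (s := Finset.univ) (fun i _ => h ⟨i, rfl⟩)
      fun i _ j _ hij => Fin.ext (by simpa only [hcolx] using congrArg col hij)
    simp only [Finset.card_univ, Fintype.card_fin] at this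
    omega
  exact hx v hv ((Finset.coe_subset.2 hvw).trans hwx) hxv (hxw.trans hwF)

end Rainbow

/-- Lemma 1.8 of the paper: if `(λ,k,μ) → n` with `n > k ≥ 2`, there is a
symmetric irreflexive `(k+1)`-ary relation `R` on `λ` with no complete
hypergraph on `n+1` vertices, such that every strong set mapping
`F : [λ]^k → [λ]^{<μ}` fails to cover some complete `R`-hypergraph `w ∈ [λ]^n`. -/
theorem stmt4 (A : Type*) [Infinite A] (μ : Cardinal) (hμ : ℵ₀ ≤ μ)
    (k n : ℕ) (hk : 2 ≤ k) (hkn : k < n) (h : SetMappingArrow A μ k n) :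
    ∃ R : (Fin (k + 1) → A) → Prop,
      (∀ (α : Fin (k + 1) → A) (σ : Equiv.Perm (Fin (k + 1))), R α → R (α ∘ σ)) ∧
      (∀ α : Fin (k + 1) → A, ¬ Function.Injective α → ¬ R α) ∧
      (∀ w : Finset A, w.card = n + 1 → ¬ IsCompleteHypergraph k R w) ∧
      (∀ F : Finset A → Set A,
        (∀ v : Finset A, v.card = k → ↑v ⊆ F v ∧ Cardinal.mk (F v) < μ) →
        ∃ w : Finset A, w.card = n ∧ IsCompleteHypergraph k R w ∧
          ∀ v ⊆ w, v.card = k → ¬ (↑w ⊆ F v)) := by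
  have hA := succ_iterate_le_mk_of_setMappingArrow hμ hkn h
  obtain ⟨col, hcol⟩ := exists_coloring_mk_fiber (A := A)
  refine ⟨IsRainbow col n, fun α σ hα => hα.comp_injective σ.injective,
    fun α hα hR => hα hR.injective, fun w hw hR => ?_, fun F hF => ?_⟩
  · have := hR.card_le_of_isRainbow (by omega) (by omega)
    omega
  · obtain ⟨w, hw, hinj, hlt, hcov⟩ := exists_rainbow_finset_not_covered hμ hkn
      (fun i => hA.trans (hcol i).ge) fun v hv => (hF v hv).2
    exact ⟨w, hw, isCompleteHypergraph_isRainbow hinj hlt, hcov⟩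
end

section
/- Let $k\ge 2$, $n=k+1$, and let $\mu$ be a regular cardinal with $\mu^{<\theta}=\mu$, and $\lambda=\mu^{+k}$. If $\operatorname{Pr}_{n,k}(\lambda,\mu,\aleph_0)$ holds, then $\operatorname{Pr}_{n,k}(\lambda,\mu,\theta)$ holds. That is, a coloring of finite subsets of $\lambda$ witnessing the covering property can be upgraded to a coloring of all subsets of size $<\theta$. -/
/-!
Fix a colouring `G₀` of the finite sets witnessing `Pr_{n,k}(λ,μ,ℵ₀)`. For each `s` of size `< θ`
choose an injection `e_s` of `s` into an ordinal `α_s < θ`, and colour `s` by its trace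
`F ↦ G₀ (s ∩ e_s⁻¹ F)` on finite sets of ordinals. A trace is determined by `α_s` and its values
on the finite subsets of `α_s`, so there are at most `θ · μ^{<θ} = μ` traces. If the `u_v`
(`v ∈ [w]^k`) have the same trace, take the finite set `F = ⋃_v e_{u_v}[v]`: the finite sets
`u_v ∩ e_{u_v}⁻¹ F` contain `v` and have the same `G₀`-colour, so one of them contains `w`.
-/

open Cardinal

universe u

/-- `Pr_{n,k}(λ,μ,θ)`. -/
def Pr (n k : ℕ) (lam mu th : Cardinal.{u}) : Prop :=
  ∃ G : Set Ordinal → Ordinal, (∀ u : Set Ordinal, G u < mu.ord) ∧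
    ∀ w : Finset Ordinal.{u}, (∀ a ∈ w, a < lam.ord) → w.card = n →
      ∀ u : Finset Ordinal → Set Ordinal,
        (∀ v ⊆ w, v.card = k →
          ↑v ⊆ u v ∧ u v ⊆ Set.Iio lam.ord ∧ Cardinal.mk (u v) < Cardinal.lift.{u+1} th) →
        (∀ v₁ ⊆ w, ∀ v₂ ⊆ w, v₁.card = k → v₂.card = k → G (u v₁) = G (u v₂)) →
        ∃ v ⊆ w, v.card = k ∧ ↑w ⊆ u v

universe v

open Set

def IsPrColoring (n k : ℕ) (lam th : Cardinal.{u}) {β : Type*} (G : Set Ordinal.{u} → β) : Prop :=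
  ∀ w : Finset Ordinal.{u}, (∀ a ∈ w, a < lam.ord) → w.card = n →
    ∀ u : Finset Ordinal → Set Ordinal,
      (∀ v ⊆ w, v.card = k →
        ↑v ⊆ u v ∧ u v ⊆ Iio lam.ord ∧ #(u v) < lift.{u+1} th) →
      (∀ v₁ ⊆ w, ∀ v₂ ⊆ w, v₁.card = k → v₂.card = k → G (u v₁) = G (u v₂)) →
      ∃ v ⊆ w, v.card = k ∧ ↑w ⊆ u v

theorem pr_iff {n k : ℕ} {lam mu th : Cardinal.{u}} :
    Pr n k lam mu th ↔
      ∃ G : Set Ordinal → Ordinal, (∀ s, G s < mu.ord) ∧ IsPrColoring n k lam th G :=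
  Iff.rfl

namespace IsPrColoring

variable {n k : ℕ} {lam th : Cardinal.{u}} {β γ : Type*} {G : Set Ordinal.{u} → β}

theorem mono {th' : Cardinal.{u}} (hG : IsPrColoring n k lam th G) (hle : th' ≤ th) :
    IsPrColoring n k lam th' G := fun w hw hcard u hu hconst =>
  hG w hw hcard u (fun v hv hvk => (hu v hv hvk).imp_right fun h =>
    h.imp_right fun hlt => hlt.trans_le (lift_le.mpr hle)) hconst

theorem of_refines {H : Set Ordinal.{u} → γ} (hH : IsPrColoring n k lam th H)
    (hGH : ∀ s t : Set Ordinal.{u}, #s < lift.{u+1} th → #t < lift.{u+1} th →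
      G s = G t → H s = H t) :
    IsPrColoring n k lam th G := fun w hw hcard u hu hconst =>
  hH w hw hcard u hu fun v₁ h₁ v₂ h₂ hk₁ hk₂ =>
    hGH _ _ (hu v₁ h₁ hk₁).2.2 (hu v₂ h₂ hk₂).2.2 (hconst v₁ h₁ v₂ h₂ hk₁ hk₂)

theorem trace {G₀ : Set Ordinal.{u} → β} (hG₀ : IsPrColoring n k lam ℵ₀ G₀)
    {e : Set Ordinal.{u} → Ordinal.{u} → Ordinal.{u}} (he : ∀ s, InjOn (e s) s) :
    IsPrColoring n k lam th fun s (F : Finset Ordinal.{u}) => G₀ (s ∩ e s ⁻¹' F) := by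
  classical
  intro w hw hcard u hu hconst
  set F : Finset Ordinal.{u} := (w.powersetCard k).biUnion fun v => v.image (e (u v))
  have hsmall : ∀ v ⊆ w, v.card = k →
      ↑v ⊆ u v ∩ e (u v) ⁻¹' F ∧ u v ∩ e (u v) ⁻¹' F ⊆ Iio lam.ord ∧
        #(u v ∩ e (u v) ⁻¹' F : Set Ordinal.{u}) < lift.{u+1} (ℵ₀ : Cardinal.{u}) := by
    intro v hv hvk
    obtain ⟨hvu, hulam, -⟩ := hu v hv hvk
    refine ⟨fun x hx => ⟨hvu hx, ?_⟩, inter_subset_left.trans hulam, ?_⟩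
    · exact Finset.mem_biUnion.mpr
        ⟨v, Finset.mem_powersetCard.mpr ⟨hv, hvk⟩, Finset.mem_image_of_mem _ hx⟩
    · rw [lift_aleph0, lt_aleph0_iff_set_finite]
      exact (F.finite_toSet.subset ((image_mono inter_subset_right).trans
        (image_preimage_subset _ _))).of_finite_image ((he (u v)).mono inter_subset_left)
  obtain ⟨v, hv, hvk, hwv⟩ := hG₀ w hw hcard (fun v => u v ∩ e (u v) ⁻¹' F) hsmall
    fun v₁ h₁ v₂ h₂ hk₁ hk₂ => congrFun (hconst v₁ h₁ v₂ h₂ hk₁ hk₂) F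
  exact ⟨v, hv, hvk, hwv.trans inter_subset_left⟩

end IsPrColoring

theorem le_of_powerlt_eq {mu th : Cardinal.{u}} (hmu : 1 < mu) (hpow : mu ^< th = mu) :
    th ≤ mu := by
  by_contra! hlt
  have hle : mu ^ mu ≤ mu := (le_powerlt mu hlt).trans hpow.le
  exact (cantor mu).not_ge (hle.trans' (power_le_power_right (two_le_iff_one_lt.mpr hmu)))

theorem lift_power_le_of_lt_powerlt {mu th : Cardinal.{u}} {κ : Cardinal.{max u v}}
    (hκ : κ < lift.{v} th) (hpow : mu ^< th = mu) : lift.{v} mu ^ κ ≤ lift.{v} mu := by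
  obtain ⟨κ, hκth, rfl⟩ := lt_lift_iff.mp hκ
  rw [← lift_power, lift_le]
  exact powerlt_le.mp hpow.le κ hκth

theorem mk_finset_lt {X : Type v} {c : Cardinal.{v}} (hX : #X < c) (hc : ℵ₀ < c) :
    #(Finset X) < c := by
  cases finite_or_infinite X
  · exact (lt_aleph0_of_finite _).trans hc
  · rwa [mk_finset_of_infinite]

def finsetFunsDeterminedBelow (mu th : Cardinal.{u}) : Set (Finset Ordinal.{u} → Ordinal.{u}) :=
  {f | (∀ F, f F < mu.ord) ∧ ∃ α < th.ord, ∀ F, f F = f (F.filter (· < α))}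

theorem mk_finsetFunsDeterminedBelow_le {mu th : Cardinal.{u}} (hmu : ℵ₀ ≤ mu) (hth : ℵ₀ < th)
    (hpow : mu ^< th = mu) : #(finsetFunsDeterminedBelow mu th) ≤ lift.{u+1} mu := by
  let decode (p : Σ α : Iio th.ord, Finset {x : Ordinal.{u} // x < α.1} → Iio mu.ord)
      (F : Finset Ordinal.{u}) : Ordinal.{u} :=
    p.2 (F.subtype (· < p.1.1))
  have hsub : finsetFunsDeterminedBelow mu th ⊆ range decode := by
    rintro f ⟨hf, α, hα, hfα⟩
    refine ⟨⟨⟨α, hα⟩, fun t => ⟨f (t.map (Function.Embedding.subtype _)), hf _⟩⟩, ?_⟩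
    funext F
    simp only [decode, Finset.subtype_map, ← hfα F]
  have hfinset (α : Iio th.ord) : #(Finset {x : Ordinal.{u} // x < α.1}) < lift.{u+1} th := by
    refine mk_finset_lt ?_ (aleph0_lt_lift.mpr hth)
    change #(Iio α.1) < _
    rw [mk_Iio_ordinal, lift_lt, ← lt_ord]
    exact α.2
  calc _ ≤ #(range decode) := mk_le_mk_of_subset hsub
    _ ≤ #(Σ α : Iio th.ord, Finset {x : Ordinal.{u} // x < α.1} → Iio mu.ord) := mk_range_le
    _ = sum fun α : Iio th.ord => lift.{u+1} mu ^ #(Finset {x : Ordinal.{u} // x < α.1}) := by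
      simp only [mk_sigma, ← power_def, mk_Iio_ordinal, card_ord]
    _ ≤ sum fun _ : Iio th.ord => lift.{u+1} mu :=
      sum_le_sum _ _ fun α => lift_power_le_of_lt_powerlt (hfinset α) hpow
    _ = lift.{u+1} (th * mu) := by rw [sum_const', mk_Iio_ordinal, card_ord, lift_mul]
    _ ≤ lift.{u+1} mu := by
      rw [lift_le]
      exact (mul_le_mul_left (le_of_powerlt_eq (one_lt_aleph0.trans_le hmu) hpow) _).trans
        (mul_eq_self hmu).le

theorem exists_injOn_eq_of_embedding {α β : Type*} [Nonempty β] {s : Set α} (e : s ↪ β) :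
    ∃ f : α → β, InjOn f s ∧ ∀ x : s, f x = e x := by
  have hf : ∀ x : s, Function.extend Subtype.val e (fun _ => Classical.arbitrary β) x = e x :=
    Subtype.val_injective.extend_apply _ _
  refine ⟨_, fun x hx y hy hxy => ?_, hf⟩
  rw [hf ⟨x, hx⟩, hf ⟨y, hy⟩] at hxy
  exact congrArg Subtype.val (e.injective hxy)

theorem exists_injOn_mapsTo_Iio {th : Cardinal.{u}} {s : Set Ordinal.{u}}
    (hs : #s < lift.{u+1} th) :
    ∃ α < th.ord, ∃ f : Ordinal.{u} → Ordinal.{u}, InjOn f s ∧ MapsTo f s (Iio α) := by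
  obtain ⟨κ, hκ, hsκ⟩ := lt_lift_iff.mp hs
  obtain ⟨e⟩ : Nonempty (s ↪ Iio κ.ord) := (le_def _ _).mp (by rw [mk_Iio_ordinal, card_ord, hsκ])
  obtain ⟨f, hinj, hf⟩ := exists_injOn_eq_of_embedding (e.trans (Function.Embedding.subtype _))
  exact ⟨κ.ord, ord_lt_ord.mpr hκ, f, hinj, fun x hx => hf ⟨x, hx⟩ ▸ (e ⟨x, hx⟩).2⟩

theorem exists_lt_ord_injOn {β : Type (u+1)} {T : Set β} {mu : Cardinal.{u}} (hmu : mu ≠ 0)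
    (hT : #T ≤ lift.{u+1} mu) : ∃ J : β → Ordinal.{u}, (∀ b, J b < mu.ord) ∧ InjOn J T := by
  obtain ⟨e⟩ : Nonempty (T ↪ Iio mu.ord) := (le_def _ _).mp (by rwa [mk_Iio_ordinal, card_ord])
  have : Nonempty (Iio mu.ord) := ⟨⟨0, ord_pos.mpr (pos_iff_ne_zero.mpr hmu)⟩⟩
  obtain ⟨f, hf, -⟩ := exists_injOn_eq_of_embedding e
  exact ⟨fun b => f b, fun b => (f b).2, Subtype.val_injective.comp_injOn hf⟩

namespace Pr

variable {n k : ℕ} {lam mu th : Cardinal.{u}}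

theorem of_le {th' : Cardinal.{u}} (h : Pr n k lam mu th) (hle : th' ≤ th) :
    Pr n k lam mu th' :=
  let ⟨G, hGlt, hG⟩ := pr_iff.mp h
  pr_iff.mpr ⟨G, hGlt, hG.mono hle⟩

theorem of_aleph0_lt (hmu : ℵ₀ ≤ mu) (hth : ℵ₀ < th) (hpow : mu ^< th = mu)
    (h : Pr n k lam mu ℵ₀) : Pr n k lam mu th := by
  obtain ⟨G₀, hG₀lt, hG₀⟩ := pr_iff.mp h
  have hcol (s : Set Ordinal.{u}) : ∃ α : Ordinal.{u}, ∃ e : Ordinal.{u} → Ordinal.{u},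
      InjOn e s ∧ (#s < lift.{u+1} th → α < th.ord ∧ MapsTo e s (Iio α)) := by
    by_cases hs : #s < lift.{u+1} th
    · obtain ⟨α, hα, e, he, hmaps⟩ := exists_injOn_mapsTo_Iio hs
      exact ⟨α, e, he, fun _ => ⟨hα, hmaps⟩⟩
    · exact ⟨0, id, injOn_id s, fun h => (hs h).elim⟩
  choose α e he hsmall using hcol
  set trace := fun s (F : Finset Ordinal.{u}) => G₀ (s ∩ e s ⁻¹' F)
  have htrace : trace '' {s | #s < lift.{u+1} th} ⊆ finsetFunsDeterminedBelow mu th := by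
    rintro _ ⟨s, hs, rfl⟩
    obtain ⟨hα, hmaps⟩ := hsmall s hs
    refine ⟨fun F => hG₀lt _, α s, hα, fun F => congrArg G₀ ?_⟩
    ext x
    simp only [mem_inter_iff, mem_preimage, Finset.coe_filter, mem_ofPred_eq]
    exact and_congr_right fun hx => (and_iff_left (hmaps hx)).symm
  obtain ⟨J, hJlt, hJ⟩ := exists_lt_ord_injOn (aleph0_pos.trans_le hmu).ne'
    ((mk_le_mk_of_subset htrace).trans (mk_finsetFunsDeterminedBelow_le hmu hth hpow))
  exact pr_iff.mpr ⟨J ∘ trace, fun s => hJlt _,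
    (hG₀.trace he).of_refines fun s t hs ht hst => hJ ⟨s, hs, rfl⟩ ⟨t, ht, rfl⟩ hst⟩

end Pr

theorem stmt6_general (k : ℕ) (mu th lam : Cardinal)
    (hreg : mu.IsRegular) (hpow : mu ^< th = mu)
    (h : Pr (k + 1) k lam mu ℵ₀) : Pr (k + 1) k lam mu th := by
  rcases le_or_gt th ℵ₀ with hth | hth
  · exact h.of_le hth
  · exact h.of_aleph0_lt hreg.aleph0_le hth hpow

/-- Claim 2.3 (main direction): for `k ≥ 2`, `n = k+1`, `μ` regular with
`μ^{<θ} = μ` and `λ = μ^{+k}`, `Pr_{n,k}(λ,μ,ℵ₀)` implies `Pr_{n,k}(λ,μ,θ)`. -/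
theorem stmt6 (k : ℕ) (hk : 2 ≤ k) (mu th lam : Cardinal)
    (hreg : mu.IsRegular) (hpow : mu ^< th = mu)
    (hlam : lam = (Order.succ)^[k] mu)
    (h : Pr (k + 1) k lam mu ℵ₀) : Pr (k + 1) k lam mu th :=
  stmt6_general k mu th lam hreg hpow h
end

section
/- (Base case $\mu=\lambda$, $k=2$, $n=3$ of the previous.) For every infinite cardinal $\mu$ there is a function $G:[\mu]^{<\aleph_0}\to\mu$ such that for every $3$-element set $w\subseteq\mu$ and finite sets $u_v\supseteq v$ ($v\in[w]^2$) with $G(u_{v_1})=G(u_{v_2})=G(u_{v_3})$, at least one $u_v$ contains all of $w$. -/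
open Cardinal

/-- Base case `λ = μ`, `k = 2`, `n = 3`: there is `G : [μ]^{<ℵ₀} → μ` such that
for every 3-element `w ⊆ μ` and finite `u_v ⊇ v` (`v ∈ [w]^2`) on which `G` is
constant, some `u_v` contains `w`. -/
theorem stmt8 (mu : Cardinal) (hmu : ℵ₀ ≤ mu) :
    ∃ G : Finset Ordinal → Ordinal, (∀ u, G u < mu.ord) ∧
      ∀ w : Finset Ordinal, (∀ a ∈ w, a < mu.ord) → w.card = 3 →
        ∀ u : Finset Ordinal → Finset Ordinal,
          (∀ v ⊆ w, v.card = 2 → v ⊆ u v ∧ ∀ a ∈ u v, a < mu.ord) →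
          (∀ v₁ ⊆ w, ∀ v₂ ⊆ w, v₁.card = 2 → v₂.card = 2 → G (u v₁) = G (u v₂)) →
          ∃ v ⊆ w, v.card = 2 ∧ w ⊆ u v := by
  classical
  set p : Ordinal → Prop := fun a => a < mu.ord with hp
  have hinf : Infinite {a // p a} := by
    rw [Cardinal.infinite_iff, hp]
    have := Ordinal.mk_Iio_ordinal mu.ord
    have h2 : #{a : Ordinal // a < mu.ord} = #(Set.Iio mu.ord) := rfl
    rw [h2, this, Cardinal.card_ord]
    simpa using hmu
  have hcard : #(Finset {a // p a}) = #{a // p a} := Cardinal.mk_finset_of_infinite _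
  obtain ⟨e⟩ := Cardinal.eq.mp hcard
  have hzero : (0 : Ordinal) < mu.ord := by
    rw [Cardinal.lt_ord]
    simpa using lt_of_lt_of_le Cardinal.aleph0_pos hmu
  refine ⟨fun s => if h : ∀ a ∈ s, p a then (e (s.subtype p)).1 else 0, ?_, ?_⟩
  · intro s
    simp only
    by_cases h : ∀ a ∈ s, p a
    · rw [dif_pos h]; exact (e (s.subtype p)).2
    · rw [dif_neg h]; exact hzero
  · intro w hw hw3 u hu hG
    -- G is injective on finsets of ordinals < mu.ord
    have hinj : ∀ s t : Finset Ordinal, (∀ a ∈ s, p a) → (∀ a ∈ t, p a) →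
        (if h : ∀ a ∈ s, p a then (e (s.subtype p)).1 else 0) =
        (if h : ∀ a ∈ t, p a then (e (t.subtype p)).1 else 0) → s = t := by
      intro s t hs ht heq
      rw [dif_pos hs, dif_pos ht] at heq
      have : s.subtype p = t.subtype p := e.injective (Subtype.ext heq)
      calc s = (s.subtype p).map (Function.Embedding.subtype _) :=
              (Finset.subtype_map_of_mem hs).symm
        _ = (t.subtype p).map (Function.Embedding.subtype _) := by rw [this]
        _ = t := Finset.subtype_map_of_mem ht
    -- pick three distinct elements of w
    obtain ⟨a, b, c, hab, hac, hbc, hwabc⟩ := Finset.card_eq_three.mp hw3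
    set v₁ : Finset Ordinal := {a, b}
    set v₂ : Finset Ordinal := {a, c}
    have hv₁w : v₁ ⊆ w := by
      intro x hx; simp only [v₁, Finset.mem_insert, Finset.mem_singleton] at hx
      rcases hx with rfl | rfl <;> simp [hwabc]
    have hv₂w : v₂ ⊆ w := by
      intro x hx; simp only [v₂, Finset.mem_insert, Finset.mem_singleton] at hx
      rcases hx with rfl | rfl <;> simp [hwabc]
    have hv₁c : v₁.card = 2 := by rw [Finset.card_insert_of_notMem (by simp [hab])]; simp
    have hv₂c : v₂.card = 2 := by rw [Finset.card_insert_of_notMem (by simp [hac])]; simp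
    obtain ⟨hsub₁, hb₁⟩ := hu v₁ hv₁w hv₁c
    obtain ⟨hsub₂, hb₂⟩ := hu v₂ hv₂w hv₂c
    have heq := hG v₁ hv₁w v₂ hv₂w hv₁c hv₂c
    have huv : u v₁ = u v₂ := hinj _ _ hb₁ hb₂ heq
    refine ⟨v₁, hv₁w, hv₁c, ?_⟩
    intro x hx
    rw [hwabc] at hx
    simp only [Finset.mem_insert, Finset.mem_singleton] at hx
    rcases hx with rfl | rfl | rfl
    · exact hsub₁ (by simp [v₁])
    · exact hsub₁ (by simp [v₁])
    · rw [huv]; exact hsub₂ (by simp [v₂])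
end

section
/- For every natural number $m$ and ordinal $\alpha$ there exists a set mapping $F:[\aleph_{\alpha+m}]^{m+1}\to[\aleph_{\alpha+m}]^{<\aleph_\alpha}$ with no free set of size $m+2$. (Kuratowski–Sierpiński negative direction: $(\aleph_{\alpha+m}, m+1, \aleph_\alpha)\not\to m+2$.) -/
open Cardinal

universe u

/-- Auxiliary: the set mapping exists, stated with a positive form of "no free set". -/
theorem stmt10_aux (m : ℕ) (α : Ordinal.{u}) :
    ∃ F : Finset Ordinal → Set Ordinal,
      (∀ x : Finset Ordinal, (∀ a ∈ x, a < (Cardinal.aleph (α + m)).ord) →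
        x.card = m + 1 →
        F x ∩ ↑x = ∅ ∧ F x ⊆ Set.Iio (Cardinal.aleph (α + m)).ord ∧
          Cardinal.mk (F x) < Cardinal.lift.{u+1} (Cardinal.aleph α)) ∧
      (∀ X : Finset Ordinal, (∀ a ∈ X, a < (Cardinal.aleph (α + m)).ord) →
        X.card = m + 2 → ∃ x ⊆ X, x.card = m + 1 ∧ (F x ∩ ↑X).Nonempty) := by
  induction m with
  | zero =>
    refine ⟨fun x => if h : x.Nonempty then Set.Iio (x.min' h) else ∅, ?_, ?_⟩
    · intro x hx hcard
      have hne : x.Nonempty := Finset.card_pos.mp (by omega)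
      simp only [dif_pos hne]
      refine ⟨?_, ?_, ?_⟩
      · ext a
        simp only [Set.mem_inter_iff, Set.mem_Iio, Finset.coe_sort_coe, Finset.mem_coe,
          Set.mem_empty_iff_false, iff_false, not_and]
        intro hlt ha
        exact absurd (x.min'_le a ha) (not_le.mpr hlt)
      · intro a ha
        exact lt_trans ha (hx _ (x.min'_mem hne))
      · rw [Ordinal.mk_Iio_ordinal]
        have h0 : x.min' hne < (Cardinal.aleph (α + (0:ℕ))).ord := hx _ (x.min'_mem hne)
        rw [Nat.cast_zero, add_zero] at h0
        exact Cardinal.lift_lt.mpr (Cardinal.lt_ord.mp h0)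
    · intro X hX hcard
      have hne : X.Nonempty := Finset.card_pos.mp (by omega)
      have hlt : X.min' hne < X.max' hne := X.min'_lt_max'_of_card (by omega)
      refine ⟨{X.max' hne}, Finset.singleton_subset_iff.mpr (X.max'_mem hne),
        Finset.card_singleton _, ?_⟩
      refine ⟨X.min' hne, ?_, X.min'_mem hne⟩
      have hne' : ({X.max' hne} : Finset Ordinal).Nonempty := Finset.singleton_nonempty _
      simp only [dif_pos hne', Finset.min'_singleton, Set.mem_Iio]
      exact hlt
  | succ m ih =>
    obtain ⟨F₀, h₁, h₂⟩ := ih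
    set lo := (Cardinal.aleph (α + (m:ℕ))).ord with hlo
    set hi := (Cardinal.aleph (α + ((m+1:ℕ)))).ord with hhi
    have hsucc : Cardinal.aleph (α + ((m+1:ℕ))) = Order.succ (Cardinal.aleph (α + (m:ℕ))) := by
      have : (α + ((m+1:ℕ) : Ordinal)) = (α + (m:ℕ)) + 1 := by
        push_cast; rw [add_assoc]
      rw [this]
      exact aleph_succ _
    -- key: for every t < hi there is an injection of Iio t into Iio lo
    have key : ∀ t : Ordinal, t < hi → ∃ g : Ordinal → Ordinal,
        (∀ a, a < t → g a < lo) ∧ Set.InjOn g (Set.Iio t) := by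
      intro t ht
      have hcard : t.card ≤ Cardinal.aleph (α + (m:ℕ)) := by
        have := Cardinal.lt_ord.mp ht
        rw [hsucc] at this
        exact Order.lt_succ_iff.mp this
      have hmk : Cardinal.mk (Set.Iio t) ≤ Cardinal.mk (Set.Iio lo) := by
        rw [Ordinal.mk_Iio_ordinal, Ordinal.mk_Iio_ordinal, hlo, Cardinal.card_ord]
        exact Cardinal.lift_le.mpr hcard
      obtain ⟨f⟩ := Cardinal.le_def _ _ |>.mp hmk
      refine ⟨fun a => if h : a < t then (f ⟨a, h⟩ : Ordinal) else 0, ?_, ?_⟩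
      · intro a ha
        simp only [dif_pos ha]
        exact (f ⟨a, ha⟩).2
      · intro a ha b hb hab
        simp only [Set.mem_Iio] at ha hb
        simp only [dif_pos ha, dif_pos hb] at hab
        have : (⟨a, ha⟩ : Set.Iio t) = ⟨b, hb⟩ := f.injective (Subtype.ext hab)
        exact congrArg Subtype.val this
    choose! g hg₁ hg₂ using key
    -- define the set mapping
    refine ⟨fun x => if h : x.Nonempty then
        {o | o < x.max' h ∧ g (x.max' h) o ∈ F₀ ((x.erase (x.max' h)).image (g (x.max' h)))}
      else ∅, ?_, ?_⟩
    · intro x hx hcard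
      have hne : x.Nonempty := Finset.card_pos.mp (by omega)
      set t := x.max' hne with htdef
      have ht : t < hi := hx _ (x.max'_mem hne)
      have herase : ∀ a ∈ x.erase t, a < t := by
        intro a ha
        exact lt_of_le_of_ne (x.le_max' a (Finset.mem_of_mem_erase ha))
          (Finset.ne_of_mem_erase ha)
      set y := (x.erase t).image (g t) with hydef
      have hinj : Set.InjOn (g t) ↑(x.erase t) := fun a ha b hb =>
        hg₂ t ht (herase a ha) (herase b hb)
      have hycard : y.card = m + 1 := by
        rw [hydef, Finset.card_image_of_injOn hinj, Finset.card_erase_of_mem (x.max'_mem hne),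
          hcard]
        omega
      have hylt : ∀ a ∈ y, a < lo := by
        intro a ha
        obtain ⟨b, hb, rfl⟩ := Finset.mem_image.mp ha
        exact hg₁ t ht b (herase b hb)
      obtain ⟨hd, _, hsz⟩ := h₁ y hylt hycard
      simp only [dif_pos hne]
      refine ⟨?_, ?_, ?_⟩
      · ext a
        simp only [Set.mem_inter_iff, Set.mem_setOf_eq, Finset.mem_coe,
          Set.mem_empty_iff_false, iff_false, not_and]
        rintro ⟨hat, hgF⟩ hax
        have haerase : a ∈ x.erase t := Finset.mem_erase.mpr ⟨ne_of_lt hat, hax⟩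
        have : g t a ∈ (y : Set Ordinal) := Finset.mem_coe.mpr
          (Finset.mem_image_of_mem _ haerase)
        have : g t a ∈ F₀ y ∩ ↑y := ⟨hgF, this⟩
        rw [hd] at this
        exact this
      · intro a ha
        exact lt_trans ha.1 ht
      · refine lt_of_le_of_lt ?_ hsz
        refine Cardinal.mk_le_of_injective (f := fun p : {o | o < t ∧ g t o ∈ F₀ y} =>
          (⟨g t p.1, p.2.2⟩ : F₀ y)) ?_
        rintro ⟨a, ha⟩ ⟨b, hb⟩ hab
        simp only [Subtype.mk.injEq] at hab ⊢
        exact hg₂ t ht ha.1 hb.1 hab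
    · intro X hX hXcard
      have hne : X.Nonempty := Finset.card_pos.mp (by omega)
      set t := X.max' hne with htdef
      have ht : t < hi := hX _ (X.max'_mem hne)
      have herase : ∀ a ∈ X.erase t, a < t := by
        intro a ha
        exact lt_of_le_of_ne (X.le_max' a (Finset.mem_of_mem_erase ha))
          (Finset.ne_of_mem_erase ha)
      set Y := (X.erase t).image (g t) with hYdef
      have hinj : Set.InjOn (g t) ↑(X.erase t) := fun a ha b hb =>
        hg₂ t ht (herase a ha) (herase b hb)
      have hYcard : Y.card = m + 2 := by
        rw [hYdef, Finset.card_image_of_injOn hinj, Finset.card_erase_of_mem (X.max'_mem hne),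
          hXcard]
        omega
      have hYlt : ∀ a ∈ Y, a < lo := by
        intro a ha
        obtain ⟨b, hb, rfl⟩ := Finset.mem_image.mp ha
        exact hg₁ t ht b (herase b hb)
      obtain ⟨y, hyY, hycard, b, hbF, hbY⟩ := h₂ Y hYlt hYcard
      obtain ⟨η, hη, rfl⟩ := Finset.mem_image.mp (Finset.mem_coe.mp hbY)
      set x₀ := (X.erase t).filter (fun a => g t a ∈ y) with hx₀def
      have hx₀sub : x₀ ⊆ X.erase t := Finset.filter_subset _ _
      have himg : x₀.image (g t) = y := by
        apply Finset.Subset.antisymm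
        · intro c hc
          obtain ⟨a, ha, rfl⟩ := Finset.mem_image.mp hc
          exact (Finset.mem_filter.mp ha).2
        · intro c hc
          obtain ⟨a, ha, rfl⟩ := Finset.mem_image.mp (hyY hc)
          exact Finset.mem_image_of_mem _ (Finset.mem_filter.mpr ⟨ha, hc⟩)
      have hx₀card : x₀.card = m + 1 := by
        have := Finset.card_image_of_injOn (hinj.mono (by exact_mod_cast hx₀sub))
        rw [himg, hycard] at this
        omega
      have htx₀ : t ∉ x₀ := fun h => (X.notMem_erase t) (hx₀sub h)
      set x := insert t x₀ with hxdef
      have hxsub : x ⊆ X := by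
        intro a ha
        rcases Finset.mem_insert.mp ha with rfl | h
        · exact X.max'_mem hne
        · exact Finset.mem_of_mem_erase (hx₀sub h)
      have hxcard : x.card = m + 2 := by
        rw [hxdef, Finset.card_insert_of_notMem htx₀, hx₀card]
      have hxne : x.Nonempty := ⟨t, Finset.mem_insert_self _ _⟩
      have hxmax : x.max' hxne = t := by
        apply le_antisymm
        · exact Finset.max'_le _ _ _ (fun a ha => X.le_max' a (hxsub ha))
        · exact Finset.le_max' _ _ (Finset.mem_insert_self _ _)
      have hxerase : x.erase t = x₀ := by
        rw [hxdef, Finset.erase_insert htx₀]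
      refine ⟨x, hxsub, hxcard, ⟨η, ?_, Finset.mem_coe.mpr (Finset.mem_of_mem_erase hη)⟩⟩
      simp only [dif_pos hxne, hxmax, hxerase, himg, Set.mem_setOf_eq]
      exact ⟨herase η hη, hbF⟩

/-- Kuratowski–Sierpiński, negative direction:
`(ℵ_{α+m}, m+1, ℵ_α) ↛ m+2`. There is a set mapping
`F : [ℵ_{α+m}]^{m+1} → [ℵ_{α+m}]^{<ℵ_α}` with no free set of size `m+2`. -/
theorem stmt10 (m : ℕ) (α : Ordinal.{u}) :
    ∃ F : Finset Ordinal → Set Ordinal,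
      (∀ x : Finset Ordinal, (∀ a ∈ x, a < (Cardinal.aleph (α + m)).ord) →
        x.card = m + 1 →
        F x ∩ ↑x = ∅ ∧ F x ⊆ Set.Iio (Cardinal.aleph (α + m)).ord ∧
          Cardinal.mk (F x) < Cardinal.lift.{u+1} (Cardinal.aleph α)) ∧
      ¬ ∃ X : Finset Ordinal, (∀ a ∈ X, a < (Cardinal.aleph (α + m)).ord) ∧
        X.card = m + 2 ∧ ∀ x ⊆ X, x.card = m + 1 → F x ∩ ↑X = ∅ := by
  obtain ⟨F, h₁, h₂⟩ := stmt10_aux m α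
  refine ⟨F, h₁, ?_⟩
  rintro ⟨X, hX, hXcard, hfree⟩
  obtain ⟨x, hxX, hxcard, hne⟩ := h₂ X hX hXcard
  rw [hfree x hxX hxcard] at hne
  exact Set.not_nonempty_empty hne
end

section
/- (Sierpiński, case $m=1$.) In ZFC: every set mapping $F:\aleph_1\to[\aleph_1]^{<\aleph_0}$ (with $\alpha\notin F(\alpha)$) admits a free pair, i.e. distinct $\alpha,\beta<\aleph_1$ with $\alpha\notin F(\beta)$ and $\beta\notin F(\alpha)$. -/
open Cardinal

/-- Sierpiński, case `m = 1` (`(ℵ₁, 1, ℵ₀) → 2`, in ZFC): every set mapping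
`F` on `ω₁` with each `F α` finite and `α ∉ F α` admits a free pair:
distinct `α, β < ω₁` with `α ∉ F β` and `β ∉ F α`. -/
theorem stmt11 (F : Ordinal → Set Ordinal)
    (hF : ∀ α, α < (Cardinal.aleph 1).ord → (F α).Finite ∧ α ∉ F α) :
    ∃ α β : Ordinal, α < (Cardinal.aleph 1).ord ∧ β < (Cardinal.aleph 1).ord ∧
      α ≠ β ∧ α ∉ F β ∧ β ∉ F α := by
  set ω₁ := (Cardinal.aleph 1).ord with hω₁
  have hnat : ∀ n : ℕ, (n : Ordinal) < ω₁ := by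
    intro n
    calc (n : Ordinal) < Ordinal.omega0 := Ordinal.nat_lt_omega0 n
    _ = (Cardinal.aleph0).ord := (Cardinal.ord_aleph0).symm
    _ ≤ ω₁ := Cardinal.ord_le_ord.mpr (by simpa using Cardinal.aleph_le_aleph.mpr zero_le_one)
  -- the countable "bad" set
  set D : Set Ordinal := (Set.range (fun n : ℕ => (n : Ordinal))) ∪ ⋃ n : ℕ, F n with hD
  have hDc : D.Countable := by
    apply Set.Countable.union (Set.countable_range _)
    exact Set.countable_iUnion fun n => ((hF n (hnat n)).1).countable
  -- find β < ω₁ with β ∉ D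
  have : ¬ (Set.Iio ω₁ ⊆ D) := by
    intro hsub
    have h1 : (Set.Iio ω₁).Countable := hDc.mono hsub
    have h2 := Ordinal.mk_Iio_ordinal ω₁
    rw [Cardinal.card_ord] at h2
    have h3 : #(Set.Iio ω₁) ≤ ℵ₀ := Cardinal.le_aleph0_iff_set_countable.mpr h1
    rw [h2, Cardinal.lift_le_aleph0] at h3
    exact absurd h3 (not_le.mpr Cardinal.aleph0_lt_aleph_one)
  obtain ⟨β, hβlt, hβD⟩ := Set.not_subset.mp this
  -- pick n with (n : Ordinal) ∉ F β
  have hFβ : (F β).Finite := (hF β hβlt).1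
  have : ∃ n : ℕ, (n : Ordinal) ∉ F β := by
    by_contra h
    push_neg at h
    have : Set.range (fun n : ℕ => (n : Ordinal)) ⊆ F β := by
      rintro x ⟨n, rfl⟩; exact h n
    have hinf : (Set.range (fun n : ℕ => (n : Ordinal))).Infinite :=
      Set.infinite_range_of_injective (fun a b => by exact_mod_cast id)
    exact hinf (hFβ.subset this)
  obtain ⟨n, hn⟩ := this
  refine ⟨(n : Ordinal), β, hnat n, hβlt, ?_, hn, ?_⟩
  · rintro rfl
    exact hβD (Or.inl ⟨n, rfl⟩)
  · intro hβ
    exact hβD (Or.inr (Set.mem_iUnion.mpr ⟨n, hβ⟩))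
end
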